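/- Let λ, μ, γ > 0, ξ > 0, 𝔫 ≥ 1, 𝑎̲ ∈ (0,1) the smaller root of μX² − (λ+μ+γ)X + λ, and â = (ξ/λ)(Σ_{k=0}^∞ 𝑎̲^k/(𝔫+k) − 1/𝔫). The solution (a_i) with a_0 = 0, a_1 = â of λ(i+𝔫)a_{i+1} = −ξ + (λ+μ+γ)(i+𝔫)a_i − μ(i+𝔫)a_{i-1} satisfies a_i > 0 for all i ≥ 1, a_i → 0 as i → ∞, and a_i = O(1/i); moreover every other positive solution with a_0 = 0 dominates it, i.e. it is the minimal positive solution. -/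

import Mathlib

/-!
With `β = μ r / λ` and `α = 1 / r` the roots of `λ X² - (λ + μ + γ) X + μ`, the recurrence factors:
`dₘ = a_{m+1} - β aₘ` solves `d_{m+1} = α dₘ - ξ / (λ (m + 1 + n))`. Its only solution that does
not grow like `αᵐ` is `vₘ = (ξ / λ) r Φ(r, 1, n + m + 1)`, and the choice of `a₁` is exactly `d₀ = v₀`.
So `a_{m+1} = β aₘ + vₘ` with `β < 1` and `0 < vₘ = O(1 / m)`, which gives positivity and
`aₘ = O(1 / m)`. For another solution `b` with `b₀ = 0`, the same factorisation gives
`b_{m+1} - a_{m+1} = β (bₘ - aₘ) + αᵐ (b₁ - a₁)`, so `b₁ < a₁` would force `bₘ → -∞`.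
-/

open Filter

/-- Lerch's transcendent `Φ(r, 1, c)`. -/
noncomputable def lerchPhi (r c : ℝ) : ℝ := ∑' k : ℕ, r ^ k / (c + k)

section lerchPhi

variable {r c : ℝ}

lemma pow_div_add_le_pow_mul_inv (hr : 0 ≤ r) (hc : 0 < c) (k : ℕ) :
    r ^ k / (c + k) ≤ r ^ k * c⁻¹ := by
  rw [← div_eq_mul_inv]
  gcongr
  exact le_add_of_nonneg_right k.cast_nonneg

lemma summable_lerchPhi (hr0 : 0 ≤ r) (hr1 : r < 1) (hc : 0 < c) :
    Summable fun k : ℕ => r ^ k / (c + k) :=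
  .of_nonneg_of_le (fun _ => by positivity) (pow_div_add_le_pow_mul_inv hr0 hc)
    ((summable_geometric_of_lt_one hr0 hr1).mul_right _)

lemma lerchPhi_eq_one_div_add (hr0 : 0 ≤ r) (hr1 : r < 1) (hc : 0 < c) :
    lerchPhi r c = 1 / c + r * lerchPhi r (c + 1) := by
  rw [lerchPhi, (summable_lerchPhi hr0 hr1 hc).tsum_eq_zero_add, lerchPhi, ← tsum_mul_left]
  congr 1
  · simp
  · refine tsum_congr fun k => ?_
    push_cast
    ring

lemma lerchPhi_pos (hr0 : 0 ≤ r) (hr1 : r < 1) (hc : 0 < c) : 0 < lerchPhi r c :=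
  (summable_lerchPhi hr0 hr1 hc).tsum_pos (fun _ => by positivity) 0 (by simpa using hc)

lemma lerchPhi_le (hr0 : 0 ≤ r) (hr1 : r < 1) (hc : 0 < c) :
    lerchPhi r c ≤ (1 - r)⁻¹ * c⁻¹ :=
  calc lerchPhi r c ≤ ∑' k : ℕ, r ^ k * c⁻¹ :=
        (summable_lerchPhi hr0 hr1 hc).tsum_le_tsum (pow_div_add_le_pow_mul_inv hr0 hc)
          ((summable_geometric_of_lt_one hr0 hr1).mul_right _)
    _ = (1 - r)⁻¹ * c⁻¹ := by rw [tsum_mul_right, tsum_geometric_of_lt_one hr0 hr1]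

end lerchPhi

noncomputable def lerchTail (r c : ℝ) (m : ℕ) : ℝ := r * lerchPhi r (c + m + 1)

section lerchTail

variable {r c : ℝ}

lemma lerchTail_zero (hr0 : 0 ≤ r) (hr1 : r < 1) (hc : 0 < c) :
    lerchTail r c 0 = lerchPhi r c - 1 / c := by
  simp [lerchTail, lerchPhi_eq_one_div_add hr0 hr1 hc]

lemma lerchTail_succ (hr0 : 0 < r) (hr1 : r < 1) (hc : 0 ≤ c) (m : ℕ) :
    lerchTail r c (m + 1) = r⁻¹ * lerchTail r c m - 1 / (c + m + 1) := by
  have hcm : 0 < c + m + 1 := by positivity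
  rw [lerchTail, lerchTail, Nat.cast_succ, ← add_assoc c, lerchPhi_eq_one_div_add hr0.le hr1 hcm,
    inv_mul_cancel_left₀ hr0.ne']
  ring

lemma lerchTail_pos (hr0 : 0 < r) (hr1 : r < 1) (hc : 0 ≤ c) (m : ℕ) : 0 < lerchTail r c m :=
  mul_pos hr0 (lerchPhi_pos hr0.le hr1 (by positivity))

lemma succ_mul_lerchTail_le (hr0 : 0 ≤ r) (hr1 : r < 1) (hc : 0 ≤ c) (m : ℕ) :
    (m + 1) * lerchTail r c m ≤ r * (1 - r)⁻¹ := by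
  have hcm : 0 < c + m + 1 := by positivity
  have hm : (m + 1) * (c + m + 1)⁻¹ ≤ 1 := by
    rw [← div_eq_mul_inv, div_le_one hcm]; linarith
  calc (m + 1) * lerchTail r c m = r * lerchPhi r (c + m + 1) * (m + 1) := by
        rw [lerchTail]; ring
    _ ≤ r * ((1 - r)⁻¹ * (c + m + 1)⁻¹) * (m + 1) := by
        gcongr; exact lerchPhi_le hr0 hr1 hcm
    _ = r * (1 - r)⁻¹ * ((m + 1) * (c + m + 1)⁻¹) := by ring
    _ ≤ r * (1 - r)⁻¹ := by
        have : 0 ≤ 1 - r := by linarith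
        exact mul_le_of_le_one_right (by positivity) hm

end lerchTail

lemma sub_eq_pow_mul_of_succ_eq {R : Type*} [CommRing R] {α : R} {w d d' : ℕ → R}
    (hd : ∀ m, d (m + 1) = α * d m + w m) (hd' : ∀ m, d' (m + 1) = α * d' m + w m) (m : ℕ) :
    d' m - d m = α ^ m * (d' 0 - d 0) := by
  induction m with
  | zero => simp
  | succ m ih => rw [hd, hd', pow_succ', mul_assoc, ← ih]; ring

lemma nonneg_of_succ_eq {R : Type*} [Semiring R] [PartialOrder R] [IsOrderedRing R]
    {β : R} {e f : ℕ → R} (hβ : 0 ≤ β) (h0 : 0 ≤ e 0) (hf : ∀ m, 0 ≤ f m)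
    (he : ∀ m, e (m + 1) = β * e m + f m) (m : ℕ) : 0 ≤ e m := by
  induction m with
  | zero => exact h0
  | succ m ih => rw [he]; exact add_nonneg (mul_nonneg hβ ih) (hf m)

lemma exists_le_div_of_succ_eq {β K : ℝ} {A v : ℕ → ℝ} (hβ0 : 0 ≤ β) (hβ1 : β < 1)
    (hA0 : A 0 = 0) (hA : ∀ m, A (m + 1) = β * A m + v m) (hv0 : ∀ m, 0 ≤ v m)
    (hvK : ∀ m : ℕ, (m + 1) * v m ≤ K) : ∃ C, ∀ m : ℕ, 1 ≤ m → A m ≤ C / m := by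
  have hA_nonneg := nonneg_of_succ_eq hβ0 hA0.ge hv0 hA
  have hK : 0 ≤ K := by simpa using (hv0 0).trans (by simpa using hvK 0)
  -- with the weight `m + c` the induction step contracts by `β (c + 1) / c = 1 - (1 - β) ^ 2`
  set c := (1 - β)⁻¹
  have hβc : β * c = c - 1 := by
    have : c * (1 - β) = 1 := inv_mul_cancel₀ (by linarith)
    linear_combination -this
  have hc1 : 1 ≤ c := one_le_inv₀ (by linarith) |>.2 (by linarith)
  have hweighted : ∀ m : ℕ, (m + c) * A m ≤ c ^ 2 * (c + 1) * K := by
    intro m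
    induction m with
    | zero => simp only [hA0, mul_zero]; positivity
    | succ m ih =>
      have hm : (0 : ℝ) ≤ m := m.cast_nonneg
      have hvm : c * ((m + 1 + c) * v m) ≤ c * ((c + 1) * K) := by
        refine mul_le_mul_of_nonneg_left ?_ (by positivity)
        nlinarith [mul_le_mul_of_nonneg_left (hvK m) (by positivity : (0 : ℝ) ≤ c + 1),
          mul_nonneg (mul_nonneg hm (by positivity : (0 : ℝ) ≤ c)) (hv0 m)]
      have hAm : c * ((m + 1 + c) * A m) ≤ (c + 1) * ((m + c) * A m) := by
        nlinarith [hA_nonneg m, mul_nonneg hm (hA_nonneg m)]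
      refine le_of_mul_le_mul_left ?_ (by positivity : 0 < c)
      calc c * ((↑(m + 1) + c) * A (m + 1))
          = β * (c * ((m + 1 + c) * A m)) + c * ((m + 1 + c) * v m) := by
            rw [hA]; push_cast; ring
        _ ≤ β * ((c + 1) * (c ^ 2 * (c + 1) * K)) + c * ((c + 1) * K) := by
            exact add_le_add (mul_le_mul_of_nonneg_left
              (hAm.trans (mul_le_mul_of_nonneg_left ih (by positivity))) hβ0) hvm
        _ = c * (c ^ 2 * (c + 1) * K) := by
            linear_combination (c + 1) ^ 2 * c * K * hβc
  refine ⟨c ^ 2 * (c + 1) * K, fun m hm => ?_⟩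
  rw [le_div_iff₀ (by exact_mod_cast hm)]
  nlinarith [hweighted m, hA_nonneg m]

lemma le_of_succ_sub_eq {α β L : ℝ} {a b : ℕ → ℝ} (hβ : 0 ≤ β) (hα : 1 < α) (h0 : a 0 = b 0)
    (ha : Tendsto a atTop (nhds L)) (hb : ∀ m, 0 < b (m + 1))
    (hab : ∀ m, b (m + 1) - a (m + 1) = β * (b m - a m) + α ^ m * (b 1 - a 1)) (m : ℕ) :
    a m ≤ b m := by
  suffices h1 : 0 ≤ b 1 - a 1 by
    exact sub_nonneg.1 <| nonneg_of_succ_eq (e := fun m => b m - a m) hβ (by simp [h0])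
      (fun m => mul_nonneg (pow_nonneg (by linarith) m) h1) hab m
  by_contra! h1
  have hle : ∀ m, b (m + 1) ≤ a (m + 1) + α ^ m * (b 1 - a 1) := by
    intro m
    have := nonneg_of_succ_eq (e := fun m => a m - b m) (f := fun m => -(α ^ m * (b 1 - a 1)))
      hβ (by simp [h0])
      (fun m => neg_nonneg.2 (mul_nonpos_of_nonneg_of_nonpos (pow_nonneg (by linarith) m) h1.le))
      (fun m => by linarith [hab m]) m
    linarith [hab m, mul_nonneg hβ this]
  have hbot : Tendsto (fun m => a (m + 1) + α ^ m * (b 1 - a 1)) atTop atBot :=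
    (ha.comp (tendsto_add_atTop_nat 1)).add_atBot
      ((tendsto_pow_atTop_atTop_of_one_lt hα).atTop_mul_const_of_neg h1)
  obtain ⟨m, hm⟩ := (hbot.eventually (eventually_lt_atBot 0)).exists
  exact (hb m).not_ge ((hle m).trans hm.le)

def IsSolution (lm mu gm xi : ℝ) (n : ℕ) (a : ℕ → ℝ) : Prop :=
  ∀ i : ℕ, lm * ((i : ℝ) + 1 + n) * a (i + 2)
    = -xi + (lm + mu + gm) * ((i : ℝ) + 1 + n) * a (i + 1) - mu * ((i : ℝ) + 1 + n) * a i

lemma mul_lt_of_quadratic_eq_zero {lm mu gm r : ℝ} (hg : 0 < gm) (hr0 : 0 < r) (hr1 : r < 1)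
    (hr : mu * r ^ 2 - (lm + mu + gm) * r + lm = 0) : mu * r < lm := by
  nlinarith [mul_pos hr0 hg]

theorem IsSolution.succ_eq {lm mu gm xi r : ℝ} {n : ℕ} {a v : ℕ → ℝ}
    (ha : IsSolution lm mu gm xi n a) (hl : lm ≠ 0) (hr0 : r ≠ 0)
    (hr : mu * r ^ 2 - (lm + mu + gm) * r + lm = 0)
    (hv : ∀ m : ℕ, v (m + 1) = r⁻¹ * v m - 1 / (n + m + 1)) (m : ℕ) :
    a (m + 1) = mu * r / lm * a m + xi / lm * v m
      + r⁻¹ ^ m * (a 1 - mu * r / lm * a 0 - xi / lm * v 0) := by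
  have hd : ∀ m : ℕ, a (m + 2) - mu * r / lm * a (m + 1)
      = r⁻¹ * (a (m + 1) - mu * r / lm * a m) - xi / lm * (1 / (n + m + 1)) := by
    intro m
    have hc : (n : ℝ) + m + 1 ≠ 0 := by positivity
    field_simp
    linear_combination r * ha m - (m + 1 + n) * a (m + 1) * hr
  have := sub_eq_pow_mul_of_succ_eq (α := r⁻¹) (d := fun m => xi / lm * v m)
    (d' := fun m => a (m + 1) - mu * r / lm * a m)
    (w := fun m : ℕ => -(xi / lm * (1 / (n + m + 1))))
    (fun m => by simp only [hv]; ring) (fun m => by simp only [hd]; ring) m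
  simp only [zero_add] at this
  linear_combination this

theorem stmt_12_general (lm mu gm xi : ℝ) (hl : 0 < lm) (hm : 0 < mu) (hg : 0 < gm) (hxi : 0 < xi)
    (n : ℕ) (hn : 1 ≤ n)
    (ra : ℝ) (hra01 : ra ∈ Set.Ioo (0 : ℝ) 1)
    (hra : mu * ra ^ 2 - (lm + mu + gm) * ra + lm = 0)
    (a : ℕ → ℝ) (h0 : a 0 = 0)
    (h1 : a 1 = (xi / lm) * ((∑' k : ℕ, ra ^ k / ((n : ℝ) + k)) - 1 / n))
    (hrec : ∀ i : ℕ,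
      lm * ((i : ℝ) + 1 + n) * a (i + 2)
        = -xi + (lm + mu + gm) * ((i : ℝ) + 1 + n) * a (i + 1)
          - mu * ((i : ℝ) + 1 + n) * a i) :
    (∀ i : ℕ, 1 ≤ i → 0 < a i) ∧
    Tendsto a atTop (nhds 0) ∧
    (∃ C : ℝ, ∀ i : ℕ, 1 ≤ i → a i ≤ C / i) ∧
    (∀ b : ℕ → ℝ, b 0 = 0 →
      (∀ i : ℕ,
        lm * ((i : ℝ) + 1 + n) * b (i + 2)
          = -xi + (lm + mu + gm) * ((i : ℝ) + 1 + n) * b (i + 1)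
            - mu * ((i : ℝ) + 1 + n) * b i) →
      (∀ i : ℕ, 1 ≤ i → 0 < b i) →
      ∀ i : ℕ, a i ≤ b i) := by
  obtain ⟨hr0, hr1⟩ := hra01
  set β := mu * ra / lm
  have hβ0 : 0 ≤ β := by positivity
  have hβ1 : β < 1 := (div_lt_one hl).2 (mul_lt_of_quadratic_eq_zero hg hr0 hr1 hra)
  have hv := lerchTail_succ hr0 hr1 n.cast_nonneg
  have hv_pos (m : ℕ) : 0 < xi / lm * lerchTail ra n m :=
    mul_pos (by positivity) (lerchTail_pos hr0 hr1 n.cast_nonneg m)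
  have hav : a 1 = xi / lm * lerchTail ra n 0 := by
    rw [h1, lerchTail_zero hr0.le hr1 (Nat.cast_pos.2 hn), lerchPhi]
  have ha (m : ℕ) : a (m + 1) = β * a m + xi / lm * lerchTail ra n m := by
    simpa [h0, hav] using IsSolution.succ_eq hrec hl.ne' hr0.ne' hra hv m
  have ha_nonneg := nonneg_of_succ_eq hβ0 h0.ge (fun m => (hv_pos m).le) ha
  have ha_pos : ∀ i, 1 ≤ i → 0 < a i := by
    rintro (_ | i) hi
    · omega
    · rw [ha]; exact add_pos_of_nonneg_of_pos (mul_nonneg hβ0 (ha_nonneg i)) (hv_pos i)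
  obtain ⟨C, hC⟩ := exists_le_div_of_succ_eq hβ0 hβ1 h0 ha (fun m => (hv_pos m).le)
    (K := xi / lm * (ra * (1 - ra)⁻¹)) fun m => by
      rw [mul_left_comm]
      exact mul_le_mul_of_nonneg_left (succ_mul_lerchTail_le hr0.le hr1 n.cast_nonneg m)
        (by positivity)
  have ha_lim : Tendsto a atTop (nhds 0) := by
    refine squeeze_zero' (.of_forall ha_nonneg) ?_ (tendsto_const_div_atTop_nhds_zero_nat C)
    filter_upwards [eventually_ge_atTop 1] using hC
  refine ⟨ha_pos, ha_lim, ⟨C, hC⟩, fun b hb0 hbrec hb_pos => ?_⟩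
  refine le_of_succ_sub_eq hβ0 ((one_lt_inv₀ hr0).2 hr1) (h0.trans hb0.symm) ha_lim
    (fun m => hb_pos _ m.succ_pos) fun m => ?_
  rw [ha, IsSolution.succ_eq hbrec hl.ne' hr0.ne' hra hv m, hb0, hav]
  ring

theorem stmt_12 (lm mu gm xi : ℝ) (hl : 0 < lm) (hm : 0 < mu) (hg : 0 < gm) (hxi : 0 < xi)
    (n : ℕ) (hn : 1 ≤ n)
    (ra : ℝ) (hra01 : ra ∈ Set.Ioo (0 : ℝ) 1)
    (hra : mu * ra ^ 2 - (lm + mu + gm) * ra + lm = 0)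
    (hra_small : ∀ z : ℝ, mu * z ^ 2 - (lm + mu + gm) * z + lm = 0 → ra ≤ z)
    (a : ℕ → ℝ) (h0 : a 0 = 0)
    (h1 : a 1 = (xi / lm) * ((∑' k : ℕ, ra ^ k / ((n : ℝ) + k)) - 1 / n))
    (hrec : ∀ i : ℕ,
      lm * ((i : ℝ) + 1 + n) * a (i + 2)
        = -xi + (lm + mu + gm) * ((i : ℝ) + 1 + n) * a (i + 1)
          - mu * ((i : ℝ) + 1 + n) * a i) :
    (∀ i : ℕ, 1 ≤ i → 0 < a i) ∧
    Tendsto a atTop (nhds 0) ∧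
    (∃ C : ℝ, ∀ i : ℕ, 1 ≤ i → a i ≤ C / i) ∧
    (∀ b : ℕ → ℝ, b 0 = 0 →
      (∀ i : ℕ,
        lm * ((i : ℝ) + 1 + n) * b (i + 2)
          = -xi + (lm + mu + gm) * ((i : ℝ) + 1 + n) * b (i + 1)
            - mu * ((i : ℝ) + 1 + n) * b i) →
      (∀ i : ℕ, 1 ≤ i → 0 < b i) →
      ∀ i : ℕ, a i ≤ b i) :=
  stmt_12_general lm mu gm xi hl hm hg hxi n hn ra hra01 hra a h0 h1 hrec
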